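/- If G is an (ι,q)-critical graph, then q ≤ |E(G)| − 1. -/

import Mathlib

open SimpleGraph

/-- `v` lies in the closed neighbourhood of the set `D`. -/
def inClosedNbhd {V : Type*} (G : SimpleGraph V) (D : Set V) (v : V) : Prop :=
  ∃ d ∈ D, d = v ∨ G.Adj d v

/-- `D` is an isolating set of `G`: the graph induced on the vertices outside
`N[D]` has no edges. -/
def IsIsolating {V : Type*} (G : SimpleGraph V) (D : Set V) : Prop :=
  ∀ u v : V, G.Adj u v → inClosedNbhd G D u ∨ inClosedNbhd G D v

/-- The isolation number of a finite graph. -/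
noncomputable def iso {V : Type*} (G : SimpleGraph V) [Fintype V] : ℕ :=
  sInf {n | ∃ D : Finset V, D.card = n ∧ IsIsolating G ↑D}

/-- The graph obtained from `G` by subdividing each edge in `A` once; the new
(subdivision) vertices are the elements of `A`. -/
def subdivide {V : Type*} (G : SimpleGraph V) (A : Finset (Sym2 V)) :
    SimpleGraph (V ⊕ {e : Sym2 V // e ∈ A}) where
  Adj x y :=
    match x, y with
    | Sum.inl u, Sum.inl v => G.Adj u v ∧ s(u, v) ∉ A
    | Sum.inl u, Sum.inr e => u ∈ (e : Sym2 V)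
    | Sum.inr e, Sum.inl u => u ∈ (e : Sym2 V)
    | Sum.inr _, Sum.inr _ => False
  symm := by
    constructor
    rintro (u | e) (v | f) h <;> dsimp only at h ⊢ <;>
      first
        | exact ⟨h.1.symm, by rw [Sym2.eq_swap]; exact h.2⟩
        | exact h
        | exact h.elim
  loopless := by
    constructor
    rintro (u | e) h <;> dsimp only at h <;>
      first
        | exact G.irrefl h.1
        | exact h

/-- A graph is `(ι,q)`-critical. -/
def IotaCritical {V : Type*} (G : SimpleGraph V) [Fintype V] (q : ℕ) : Prop :=
  (∀ A : Finset (Sym2 V), ↑A ⊆ G.edgeSet → A.card = q →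
      iso G < iso (subdivide G A)) ∧
  (∃ A : Finset (Sym2 V), ↑A ⊆ G.edgeSet ∧ A.card = q - 1 ∧
      iso (subdivide G A) = iso G)

/-- `G` is a star, i.e. isomorphic to `K_{1,k}` for some `k ≥ 0`. -/
def IsStar {V : Type*} (G : SimpleGraph V) : Prop :=
  ∃ k : ℕ, Nonempty (G ≃g completeBipartiteGraph Unit (Fin k))

/-!
Suppose `q ≥ |E(G)|`. Criticality then provides `A ⊆ E(G)` missing at most one edge with
`ι(G_A) = ι(G)`; we show instead that `ι(G) < ι(G_A)` for every such `A`.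

Take a minimum isolating set `D` of `G_A`. Among the original vertices, a vertex of `D` reaches
only its footprint (itself, or both ends of its subdivided edge) and, across the single
unsubdivided edge, at most one more vertex, whereas in `G` a vertex dominates its whole closed
neighbourhood. If `D` has no subdivision vertex, its original vertices form a vertex cover of `G`,
and a connected non-star graph has an isolating set smaller than any vertex cover. Otherwise pick
a subdivision vertex of `D` on an edge `pp'`; together with one more vertex of `D` it can be traded
for a single vertex of `G`: a vertex of another footprint that dominates `p`, or a neighbour of
`p` off the edge. No trade is possible only if `pp'` with its neighbours is a `K₂` or `P₃`
component, i.e. `G` is a star.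
-/
section Graph

variable {V : Type*} {G : SimpleGraph V}

lemma isStar_of_forall_adj [Fintype V] (c : V) (hc : ∀ w, w ≠ c → G.Adj c w)
    (h : ∀ x y, G.Adj x y → x = c ∨ y = c) : IsStar G := by
  classical
  refine ⟨Fintype.card {w // w ≠ c}, ⟨RelIso.trans ?_ (completeBipartiteGraphCongr
    (Equiv.equivPUnit {w // w = c}) (Fintype.equivFin {w // w ≠ c}))⟩⟩
  refine ⟨(Equiv.sumCompl (· = c)).symm, fun {a b} => ?_⟩
  by_cases ha : a = c <;> by_cases hb : b = c <;> simp [ha, hb]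
  · exact hc b hb
  · exact (hc a ha).symm
  · exact fun hab => (h a b hab).elim ha hb

lemma exists_adj_adj_ne_of_not_isStar [Fintype V] (hconn : G.Connected) (hstar : ¬ IsStar G)
    (c : V) : ∃ y z, G.Adj c y ∧ G.Adj y z ∧ z ≠ c := by
  by_contra! hleaf
  have hnear : ∀ w, w = c ∨ G.Adj c w := fun w => by
    induction (reachable_iff_reflTransGen c w).1 (hconn.preconnected c w) with
    | refl => exact Or.inl rfl
    | tail _ hbw ih =>
      rcases ih with rfl | hcb
      · exact Or.inr hbw
      · exact Or.inl (hleaf _ _ hcb hbw)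
  refine hstar (isStar_of_forall_adj c (fun w hw => (hnear w).resolve_left hw) fun x y hxy => ?_)
  rcases hnear x with rfl | hcx
  · exact Or.inl rfl
  · exact Or.inr (hleaf x y hcx hxy)

lemma iso_le_card [Fintype V] {D : Finset V} (hD : IsIsolating G ↑D) : iso G ≤ D.card :=
  Nat.sInf_le ⟨D, rfl, hD⟩

lemma exists_isIsolating_card_eq_iso [Fintype V] :
    ∃ D : Finset V, IsIsolating G ↑D ∧ D.card = iso G := by
  obtain ⟨D, hD, hiso⟩ := Nat.sInf_mem (s := {n | ∃ D : Finset V, D.card = n ∧ IsIsolating G ↑D})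
    ⟨_, Finset.univ, rfl, fun u _ _ => Or.inl ⟨u, by simp, Or.inl rfl⟩⟩
  exact ⟨D, hiso, hD⟩

lemma isIsolating_of_isVertexCover {C D : Set V} (hC : G.IsVertexCover C)
    (hCD : ∀ x ∈ C, inClosedNbhd G D x) : IsIsolating G D := fun _ _ hxy =>
  (hC hxy).imp (hCD _) (hCD _)

lemma exists_isIsolating_card_lt_of_isVertexCover [Fintype V] [DecidableEq V]
    (hconn : G.Connected) (hstar : ¬ IsStar G) {C : Finset V} (hC : G.IsVertexCover ↑C) :
    ∃ D : Finset V, IsIsolating G ↑D ∧ D.card < C.card := by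
  obtain ⟨c, hc⟩ : C.Nonempty := by
    obtain ⟨v⟩ := hconn.nonempty
    obtain ⟨y, -, hvy, -⟩ := exists_adj_adj_ne_of_not_isStar hconn hstar v
    exact (hC hvy).elim (fun h => ⟨v, h⟩) fun h => ⟨y, h⟩
  obtain ⟨y, z, hcy, hyz, hzc⟩ := exists_adj_adj_ne_of_not_isStar hconn hstar c
  by_cases hy : y ∈ C
  · refine ⟨C.erase c, isIsolating_of_isVertexCover hC fun x hx => ?_,
      Finset.card_erase_lt_of_mem hc⟩
    by_cases hxc : x = c
    · exact ⟨y, by simp [hy, hcy.ne'], Or.inr (hxc ▸ hcy.symm)⟩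
    · exact ⟨x, by simpa [hxc] using hx, Or.inl rfl⟩
  · have hz : z ∈ C := (hC hyz).resolve_left hy
    refine ⟨insert y ((C.erase c).erase z), isIsolating_of_isVertexCover hC fun x hx => ?_, ?_⟩
    · by_cases hxc : x = c
      · exact ⟨y, by simp, Or.inr (hxc ▸ hcy.symm)⟩
      by_cases hxz : x = z
      · exact ⟨y, by simp, Or.inr (hxz ▸ hyz)⟩
      exact ⟨x, by simp [hxc, hxz, hx], Or.inl rfl⟩
    · have h2 : 2 ≤ C.card := Finset.one_lt_card.2 ⟨c, hc, z, hz, hzc.symm⟩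
      calc (insert y ((C.erase c).erase z)).card ≤ ((C.erase c).erase z).card + 1 :=
            Finset.card_insert_le _ _
        _ < C.card := by
          rw [Finset.card_erase_of_mem (by simpa [hzc] using hz), Finset.card_erase_of_mem hc]
          omega

end Graph

section Subdivision

variable {V : Type*} {G : SimpleGraph V} {A : Finset (Sym2 V)}

def footprint : V ⊕ {e : Sym2 V // e ∈ A} → Sym2 V :=
  Sum.elim (fun v => s(v, v)) Subtype.val

noncomputable def anchor : V ⊕ {e : Sym2 V // e ∈ A} → V :=
  Sum.elim id fun e => e.1.out.1

lemma anchor_mem_footprint (d : V ⊕ {e : Sym2 V // e ∈ A}) : anchor d ∈ footprint d := by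
  rcases d with v | e
  exacts [Sym2.mem_mk_left v v, Sym2.out_fst_mem e.1]

lemma eq_or_adj_of_mem_footprint (hA : ↑A ⊆ G.edgeSet) {d : V ⊕ {e : Sym2 V // e ∈ A}}
    {x y : V} (hx : x ∈ footprint d) (hy : y ∈ footprint d) : y = x ∨ G.Adj y x := by
  rcases d with v | ⟨e, he⟩
  · simp only [footprint, Sum.elim_inl, Sym2.mem_iff, or_self] at hx hy
    exact Or.inl (hy.trans hx.symm)
  · by_cases hyx : y = x
    · exact Or.inl hyx
    · have hedge : s(y, x) ∈ G.edgeSet := (Sym2.mem_and_mem_iff hyx).1 ⟨hy, hx⟩ ▸ hA he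
      exact Or.inr hedge

lemma mem_footprint_or_of_subdivide {d : V ⊕ {e : Sym2 V // e ∈ A}} {x : V}
    (h : d = Sum.inl x ∨ (subdivide G A).Adj d (Sum.inl x)) :
    x ∈ footprint d ∨ ∃ s, d = Sum.inl s ∧ G.Adj s x ∧ s(s, x) ∉ A := by
  rcases d with s | e
  · rcases h with h | h
    · exact Or.inl (by simp [footprint, Sum.inl_injective h])
    · exact Or.inr ⟨s, rfl, h⟩
  · rcases h with h | h
    · exact absurd h Sum.inr_ne_inl
    · exact Or.inl h

lemma eq_or_adj_of_subdivide (hA : ↑A ⊆ G.edgeSet) {d : V ⊕ {e : Sym2 V // e ∈ A}} {x y : V}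
    (h : d = Sum.inl x ∨ (subdivide G A).Adj d (Sum.inl x)) (hy : y ∈ footprint d) :
    y = x ∨ G.Adj y x := by
  rcases mem_footprint_or_of_subdivide h with hx | ⟨s, rfl, hsx, -⟩
  · exact eq_or_adj_of_mem_footprint hA hx hy
  · simp only [footprint, Sum.elim_inl, Sym2.mem_iff, or_self] at hy
    exact Or.inr (hy ▸ hsx)

lemma eq_or_eq_of_subdivide_inr {e : {e : Sym2 V // e ∈ A}} {x p p' : V} (hpe : e.1 = s(p, p'))
    (h : Sum.inr e = Sum.inl x ∨ (subdivide G A).Adj (Sum.inr e) (Sum.inl x)) : x = p ∨ x = p' := by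
  rcases h with h | h
  · exact absurd h Sum.inr_ne_inl
  · exact Sym2.mem_iff.1 (show x ∈ s(p, p') from hpe ▸ h)

variable {D : Finset (V ⊕ {e : Sym2 V // e ∈ A})}

lemma inClosedNbhd_subdivide_inl {x : V}
    (hx : inClosedNbhd (subdivide G A) ↑D (Sum.inl x)) :
    (∃ d ∈ D, x ∈ footprint d) ∨ ∃ s, Sum.inl s ∈ D ∧ G.Adj s x ∧ s(s, x) ∉ A := by
  obtain ⟨d, hd, h⟩ := hx
  rcases mem_footprint_or_of_subdivide h with hx | ⟨s, rfl, hsx⟩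
  exacts [Or.inl ⟨d, hd, hx⟩, Or.inr ⟨s, hd, hsx⟩]

/-- `D` has to dominate both halves `x s_xy` and `s_xy y` of the subdivided edge. -/
lemma IsIsolating.subdivide_cases (hD : IsIsolating (subdivide G A) ↑D) {x y : V}
    (hxy : s(x, y) ∈ A) :
    (inClosedNbhd (subdivide G A) ↑D (Sum.inl x) ∧ inClosedNbhd (subdivide G A) ↑D (Sum.inl y)) ∨
      Sum.inr ⟨s(x, y), hxy⟩ ∈ D ∨ Sum.inl x ∈ D ∨ Sum.inl y ∈ D := by
  have hsub : inClosedNbhd (subdivide G A) ↑D (Sum.inr ⟨s(x, y), hxy⟩) →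
      Sum.inr ⟨s(x, y), hxy⟩ ∈ D ∨ Sum.inl x ∈ D ∨ Sum.inl y ∈ D := by
    rintro ⟨d | e, hd, h | h⟩
    · exact absurd h Sum.inl_ne_inr
    · rcases Sym2.mem_iff.1 (show d ∈ s(x, y) from h) with rfl | rfl
      exacts [Or.inr (Or.inl hd), Or.inr (Or.inr hd)]
    · exact Or.inl (h ▸ hd)
    · exact h.elim
  rcases hD _ _ (show (subdivide G A).Adj (Sum.inl x) (Sum.inr ⟨s(x, y), hxy⟩) from
      Sym2.mem_mk_left x y) with hx | hx
  · rcases hD _ _ (show (subdivide G A).Adj (Sum.inl y) (Sum.inr ⟨s(x, y), hxy⟩) from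
        Sym2.mem_mk_right x y) with hy | hy
    exacts [Or.inl ⟨hx, hy⟩, Or.inr (hsub hy)]
  · exact Or.inr (hsub hx)

/-- In `G_A` an edge of `G` is dominated at an end, at its subdivision vertex, or (if unsubdivided)
directly; the single exceptional vertex `w₀` cannot be both ends of an edge. -/
lemma isIsolating_of_isIsolating_subdivide (hD : IsIsolating (subdivide G A) ↑D) {D' : Set V}
    (w₀ : V) (hS : ∀ s, Sum.inl s ∈ D → inClosedNbhd G D' s)
    (hC : ∀ x, inClosedNbhd (subdivide G A) ↑D (Sum.inl x) → x = w₀ ∨ inClosedNbhd G D' x)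
    (hF : ∀ x y, G.Adj x y → s(x, y) ∉ A → inClosedNbhd G D' x ∨ inClosedNbhd G D' y) :
    IsIsolating G D' := by
  intro x y hxy
  by_cases hxyA : s(x, y) ∈ A
  · have hboth : inClosedNbhd (subdivide G A) ↑D (Sum.inl x) →
        inClosedNbhd (subdivide G A) ↑D (Sum.inl y) →
        inClosedNbhd G D' x ∨ inClosedNbhd G D' y := by
      intro hx hy
      rcases hC x hx with rfl | hx
      · exact Or.inr ((hC y hy).resolve_left hxy.ne')
      · exact Or.inl hx
    rcases hD.subdivide_cases hxyA with ⟨hx, hy⟩ | he | hx | hy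
    · exact hboth hx hy
    · exact hboth ⟨_, he, Or.inr (Sym2.mem_mk_left x y)⟩ ⟨_, he, Or.inr (Sym2.mem_mk_right x y)⟩
    · exact Or.inl (hS x hx)
    · exact Or.inr (hS y hy)
  · exact hF x y hxy hxyA

lemma isVertexCover_toLeft (hF : (G.edgeSet \ ↑A).Subsingleton)
    (hD : IsIsolating (subdivide G A) ↑D) (hT : ∀ e, Sum.inr e ∉ D) :
    G.IsVertexCover ↑D.toLeft := by
  have hcov : ∀ {x}, inClosedNbhd (subdivide G A) ↑D (Sum.inl x) →
      Sum.inl x ∈ D ∨ ∃ s, Sum.inl s ∈ D ∧ G.Adj s x ∧ s(s, x) ∉ A := fun hx => by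
    rcases inClosedNbhd_subdivide_inl hx with ⟨d | e, hd, hxd⟩ | h
    · simp only [footprint, Sum.elim_inl, Sym2.mem_iff, or_self] at hxd
      exact Or.inl (hxd ▸ hd)
    · exact absurd hd (hT e)
    · exact Or.inr h
  intro x y hxy
  simp only [Finset.mem_coe, Finset.mem_toLeft]
  by_cases hxyA : s(x, y) ∈ A
  · rcases hD.subdivide_cases hxyA with ⟨hx, hy⟩ | he | hx | hy
    · rcases hcov hx with hx | ⟨s, hs, hsx, hsxA⟩
      · exact Or.inl hx
      rcases hcov hy with hy | ⟨s', hs', hs'y, hs'yA⟩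
      · exact Or.inr hy
      rcases Sym2.eq_iff.1 (hF ⟨hsx, hsxA⟩ ⟨hs'y, hs'yA⟩) with ⟨-, rfl⟩ | ⟨rfl, -⟩
      exacts [absurd rfl hxy.ne, Or.inr hs]
    · exact absurd he (hT _)
    · exact Or.inl hx
    · exact Or.inr hy
  · have hend : ∀ {a b}, G.Adj a b → s(a, b) ∉ A → inClosedNbhd (subdivide G A) ↑D (Sum.inl a) →
        Sum.inl a ∈ D ∨ Sum.inl b ∈ D := fun hab habA ha => by
      rcases hcov ha with ha | ⟨s, hs, hsa, hsaA⟩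
      · exact Or.inl ha
      rcases Sym2.eq_iff.1 (hF ⟨hsa, hsaA⟩ ⟨hab, habA⟩) with ⟨rfl, -⟩ | ⟨rfl, -⟩
      exacts [absurd hsa (G.loopless.irrefl _), Or.inr hs]
    rcases hD _ _ (show (subdivide G A).Adj (Sum.inl x) (Sum.inl y) from ⟨hxy, hxyA⟩) with hx | hy
    · exact hend hxy hxyA hx
    · exact (hend hxy.symm (by rwa [Sym2.eq_swap]) hy).symm

lemma exists_adj_of_inClosedNbhd_of_far {e : {e : Sym2 V // e ∈ A}} {p p' x : V}
    (hfar : ∀ d ∈ D, d ≠ Sum.inr e → ∀ z ∈ footprint d, p ≠ z ∧ ¬ G.Adj p z)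
    (hpe : e.1 = s(p, p')) (hpx : G.Adj p x) (hxp' : x ≠ p')
    (hx : inClosedNbhd (subdivide G A) ↑D (Sum.inl x)) :
    ∃ b, Sum.inl b ∈ D ∧ G.Adj b x ∧ s(b, x) ∉ A := by
  rcases inClosedNbhd_subdivide_inl hx with ⟨d, hd, hxd⟩ | h
  · by_cases hde : d = Sum.inr e
    · subst hde
      rcases Sym2.mem_iff.1 (show x ∈ s(p, p') from hpe ▸ hxd) with rfl | rfl
      exacts [absurd hpx (G.loopless.irrefl _), absurd rfl hxp']
    · exact absurd hpx (hfar d hd hde x hxd).2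
  · exact h

end Subdivision

section Exchange

variable {V : Type*} [DecidableEq V] {G : SimpleGraph V} {A : Finset (Sym2 V)}
  {D : Finset (V ⊕ {e : Sym2 V // e ∈ A})} {e : {e : Sym2 V // e ∈ A}}
  {d : V ⊕ {e : Sym2 V // e ∈ A}}

noncomputable def exchange (D : Finset (V ⊕ {e : Sym2 V // e ∈ A})) (e : {e : Sym2 V // e ∈ A})
    (d : V ⊕ {e : Sym2 V // e ∈ A}) (w : V) : Finset V :=
  insert w (((D.erase (Sum.inr e)).erase d).image anchor)

lemma card_exchange_lt (he : Sum.inr e ∈ D) (hd : d ∈ D) (hde : d ≠ Sum.inr e) (w : V) :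
    (exchange D e d w).card < D.card := by
  have h2 : 2 ≤ D.card := Finset.one_lt_card.2 ⟨d, hd, _, he, hde⟩
  calc (exchange D e d w).card ≤ ((D.erase (Sum.inr e)).erase d).card + 1 :=
        (Finset.card_insert_le _ _).trans (Nat.add_le_add_right Finset.card_image_le 1)
    _ < D.card := by
      rw [Finset.card_erase_of_mem (Finset.mem_erase.2 ⟨hde, hd⟩), Finset.card_erase_of_mem he]
      omega

lemma anchor_mem_exchange {d' : V ⊕ {e : Sym2 V // e ∈ A}} (hd' : d' ∈ D)
    (hd'e : d' ≠ Sum.inr e) (hd'd : d' ≠ d) (w : V) : anchor d' ∈ exchange D e d w :=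
  Finset.mem_insert_of_mem (Finset.mem_image_of_mem _
    (Finset.mem_erase.2 ⟨hd'd, Finset.mem_erase.2 ⟨hd'e, hd'⟩⟩))

lemma inClosedNbhd_exchange_self (w : V) : inClosedNbhd G ↑(exchange D e d w) w :=
  ⟨w, by simp [exchange], Or.inl rfl⟩

lemma inClosedNbhd_exchange_of_adj {w x : V} (h : G.Adj w x) :
    inClosedNbhd G ↑(exchange D e d w) x :=
  ⟨w, by simp [exchange], Or.inr h⟩

lemma eq_or_inClosedNbhd_exchange (hA : ↑A ⊆ G.edgeSet) {w w₀ : V}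
    (hcov : ∀ x, inClosedNbhd (subdivide G A) {Sum.inr e, d} (Sum.inl x) →
      x = w₀ ∨ inClosedNbhd G ↑(exchange D e d w) x)
    {x : V} (hx : inClosedNbhd (subdivide G A) ↑D (Sum.inl x)) :
    x = w₀ ∨ inClosedNbhd G ↑(exchange D e d w) x := by
  obtain ⟨d', hd', h⟩ := hx
  by_cases hd'e : d' = Sum.inr e ∨ d' = d
  · exact hcov x ⟨d', hd'e, h⟩
  rw [not_or] at hd'e
  exact Or.inr ⟨anchor d', anchor_mem_exchange hd' hd'e.1 hd'e.2 w,
    eq_or_adj_of_subdivide hA h (anchor_mem_footprint d')⟩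

lemma isIsolating_exchange (hA : ↑A ⊆ G.edgeSet) (hD : IsIsolating (subdivide G A) ↑D) {w : V}
    (w₀ : V)
    (hcov : ∀ x, inClosedNbhd (subdivide G A) {Sum.inr e, d} (Sum.inl x) →
      x = w₀ ∨ inClosedNbhd G ↑(exchange D e d w) x)
    (hS : ∀ s, d = Sum.inl s → inClosedNbhd G ↑(exchange D e d w) s)
    (hF : ∀ x y, G.Adj x y → s(x, y) ∉ A →
      inClosedNbhd G ↑(exchange D e d w) x ∨ inClosedNbhd G ↑(exchange D e d w) y) :
    IsIsolating G ↑(exchange D e d w) := by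
  refine isIsolating_of_isIsolating_subdivide hD w₀ (fun s hs => ?_)
    (fun x hx => eq_or_inClosedNbhd_exchange hA hcov hx) hF
  by_cases hsd : d = Sum.inl s
  · exact hS s hsd
  · exact ⟨s, anchor_mem_exchange hs Sum.inl_ne_inr (Ne.symm hsd) w, Or.inl rfl⟩

lemma exists_isIsolating_of_near_footprint_of_unsubdivided (hA : ↑A ⊆ G.edgeSet)
    (hD : IsIsolating (subdivide G A) ↑D) {p p' z z' : V} (hpe : e.1 = s(p, p'))
    (he : Sum.inr e ∈ D) (hd : d ∈ D) (hde : d ≠ Sum.inr e) (hzz' : footprint d = s(z, z'))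
    (hpz : p = z ∨ G.Adj p z) (hFp' : ∀ a b, G.Adj a b → s(a, b) ∉ A → a = p' ∨ b = p')
    (hdF : ∀ s c, d = Sum.inl s → G.Adj s c → s(s, c) ∉ A → False) :
    ∃ D' : Finset V, IsIsolating G ↑D' ∧ D'.card < D.card := by
  have hpp' : G.Adj p p' := by simpa [hpe] using hA e.2
  have hz : inClosedNbhd G ↑(exchange D e d p) z := ⟨p, by simp [exchange], hpz⟩
  refine ⟨_, isIsolating_exchange hA hD z' ?_ ?_ ?_, card_exchange_lt he hd hde p⟩
  · rintro c ⟨d', hd', h⟩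
    rcases hd' with rfl | rfl
    · rcases eq_or_eq_of_subdivide_inr hpe h with rfl | rfl
      exacts [Or.inr (inClosedNbhd_exchange_self c), Or.inr (inClosedNbhd_exchange_of_adj hpp')]
    · rcases mem_footprint_or_of_subdivide h with hc | ⟨s, rfl, hsc, hscA⟩
      · rcases Sym2.mem_iff.1 (show c ∈ s(z, z') from hzz' ▸ hc) with rfl | rfl
        exacts [Or.inr hz, Or.inl rfl]
      · exact (hdF s c rfl hsc hscA).elim
  · rintro s rfl
    have hzs : z ∈ footprint (Sum.inl s) := hzz' ▸ Sym2.mem_mk_left z z'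
    obtain rfl : z = s := by simpa [footprint] using hzs
    exact hz
  · intro a b hab habA
    rcases hFp' a b hab habA with rfl | rfl
    exacts [Or.inl (inClosedNbhd_exchange_of_adj hpp'), Or.inr (inClosedNbhd_exchange_of_adj hpp')]

lemma exists_isIsolating_of_near_footprint (hA : ↑A ⊆ G.edgeSet)
    (hF : (G.edgeSet \ ↑A).Subsingleton) (hD : IsIsolating (subdivide G A) ↑D) {p p' z : V}
    (hpe : e.1 = s(p, p')) (he : Sum.inr e ∈ D) (hd : d ∈ D) (hde : d ≠ Sum.inr e)
    (hz : z ∈ footprint d) (hpz : p = z ∨ G.Adj p z) :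
    ∃ D' : Finset V, IsIsolating G ↑D' ∧ D'.card < D.card := by
  obtain ⟨z', hzz'⟩ := Sym2.mem_iff_exists.1 hz
  have hS : ∀ s, d = Sum.inl s → inClosedNbhd G ↑(exchange D e d z) s := by
    rintro s rfl
    obtain rfl : z = s := by simpa [footprint] using hz
    exact inClosedNbhd_exchange_self z
  have hcov : ∀ x, inClosedNbhd (subdivide G A) {Sum.inr e, d} (Sum.inl x) →
      x = p' ∨ inClosedNbhd G ↑(exchange D e d z) x := by
    rintro x ⟨d', hd', h⟩
    rcases hd' with rfl | rfl
    · rcases eq_or_eq_of_subdivide_inr hpe h with rfl | rfl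
      exacts [Or.inr ⟨z, by simp [exchange], hpz.imp Eq.symm Adj.symm⟩, Or.inl rfl]
    · exact Or.inr ⟨z, by simp [exchange], eq_or_adj_of_subdivide hA h hz⟩
  by_cases hF₁ : ∀ x y, G.Adj x y → s(x, y) ∉ A →
      inClosedNbhd G ↑(exchange D e d z) x ∨ inClosedNbhd G ↑(exchange D e d z) y
  · exact ⟨_, isIsolating_exchange hA hD p' hcov hS hF₁, card_exchange_lt he hd hde z⟩
  -- The unsubdivided edge escapes `N[exchange D e d z]`, so it passes through `p'`: trade for `p`.
  push Not at hF₁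
  obtain ⟨x, y, hxy, hxyA, hx, hy⟩ := hF₁
  have hxy' : ∀ a b, G.Adj a b → s(a, b) ∉ A → s(a, b) = s(x, y) :=
    fun a b hab habA => hF ⟨hab, habA⟩ ⟨hxy, hxyA⟩
  have hp' : p' ∈ s(x, y) := by
    rcases hD _ _ (show (subdivide G A).Adj (Sum.inl x) (Sum.inl y) from ⟨hxy, hxyA⟩) with h | h
    · rcases eq_or_inClosedNbhd_exchange hA hcov h with rfl | h
      exacts [Sym2.mem_mk_left _ _, absurd h hx]
    · rcases eq_or_inClosedNbhd_exchange hA hcov h with rfl | h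
      exacts [Sym2.mem_mk_right _ _, absurd h hy]
  refine exists_isIsolating_of_near_footprint_of_unsubdivided hA hD hpe he hd hde hzz' hpz
    (fun a b hab habA => ?_) fun s c hs hsc hscA => ?_
  · rcases Sym2.mem_iff.1 (hxy' a b hab habA ▸ hp') with h | h
    exacts [Or.inl h.symm, Or.inr h.symm]
  · rcases Sym2.mem_iff.1 (hxy' s c hsc hscA ▸ Sym2.mem_mk_left s c) with rfl | rfl
    exacts [hx (hS s hs), hy (hS s hs)]

lemma exists_isIsolating_of_adj_adj (hA : ↑A ⊆ G.edgeSet) (hD : IsIsolating (subdivide G A) ↑D)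
    {p p' b x : V} (hpe : e.1 = s(p, p')) (he : Sum.inr e ∈ D) (hb : Sum.inl b ∈ D)
    (hpx : G.Adj p x) (hbx : G.Adj b x) (hFx : ∀ y z, G.Adj y z → s(y, z) ∉ A → y = x ∨ z = x) :
    ∃ D' : Finset V, IsIsolating G ↑D' ∧ D'.card < D.card := by
  refine ⟨_, isIsolating_exchange hA hD p' (w := x) ?_ ?_ ?_,
    card_exchange_lt he hb Sum.inl_ne_inr x⟩
  · rintro c ⟨d', hd', h⟩
    rcases hd' with rfl | rfl
    · rcases eq_or_eq_of_subdivide_inr hpe h with rfl | rfl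
      exacts [Or.inr (inClosedNbhd_exchange_of_adj hpx.symm), Or.inl rfl]
    · rcases mem_footprint_or_of_subdivide h with hc | ⟨s, hs, hsc, hscA⟩
      · obtain rfl : c = b := by simpa [footprint] using hc
        exact Or.inr (inClosedNbhd_exchange_of_adj hbx.symm)
      · obtain rfl : b = s := Sum.inl_injective hs
        rcases hFx b c hsc hscA with rfl | rfl
        exacts [absurd hbx (G.loopless.irrefl _), Or.inr (inClosedNbhd_exchange_self c)]
  · rintro s hs
    obtain rfl : b = s := Sum.inl_injective hs
    exact inClosedNbhd_exchange_of_adj hbx.symm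
  · intro y z hyz hyzA
    rcases hFx y z hyz hyzA with rfl | rfl
    exacts [Or.inl (inClosedNbhd_exchange_self y), Or.inr (inClosedNbhd_exchange_self z)]

lemma exists_isIsolating_or_pendant (hA : ↑A ⊆ G.edgeSet) (hF : (G.edgeSet \ ↑A).Subsingleton)
    (hD : IsIsolating (subdivide G A) ↑D) {p p' x : V} (hpe : e.1 = s(p, p'))
    (he : Sum.inr e ∈ D) (hfar : ∀ d ∈ D, d ≠ Sum.inr e → ∀ z ∈ footprint d, p ≠ z ∧ ¬ G.Adj p z)
    (hpx : G.Adj p x) (hxp' : x ≠ p') :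
    (∃ D' : Finset V, IsIsolating G ↑D' ∧ D'.card < D.card) ∨
      (s(p, x) ∉ A ∧ ∀ y, G.Adj x y → y = p) := by
  have hxfoot : ∀ d ∈ D, x ∉ footprint d := fun d hd hxd => by
    by_cases hde : d = Sum.inr e
    · subst hde
      rcases Sym2.mem_iff.1 (show x ∈ s(p, p') from hpe ▸ hxd) with rfl | rfl
      exacts [G.loopless.irrefl _ hpx, hxp' rfl]
    · exact (hfar d hd hde x hxd).2 hpx
  have hpD : Sum.inl p ∉ D := fun hp => (hfar _ hp Sum.inl_ne_inr p (Sym2.mem_mk_left p p)).1 rfl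
  by_cases hpxA : s(p, x) ∈ A
  · left
    rcases hD.subdivide_cases hpxA with ⟨-, hx⟩ | hT | hp | hx
    · obtain ⟨b, hb, hbx, hbxA⟩ := exists_adj_of_inClosedNbhd_of_far hfar hpe hpx hxp' hx
      refine exists_isIsolating_of_adj_adj hA hD hpe he hb hpx hbx fun y z hyz hyzA => ?_
      rcases Sym2.eq_iff.1 (hF ⟨hyz, hyzA⟩ ⟨hbx, hbxA⟩) with ⟨-, h⟩ | ⟨h, -⟩
      exacts [Or.inr h, Or.inl h]
    · exact absurd (Sym2.mem_mk_right p x) (hxfoot _ hT)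
    · exact absurd hp hpD
    · exact absurd (Sym2.mem_mk_left x x) (hxfoot _ hx)
  by_cases hleaf : ∀ y, G.Adj x y → y = p
  · exact Or.inr ⟨hpxA, hleaf⟩
  left
  push Not at hleaf
  obtain ⟨y, hxy, hyp⟩ := hleaf
  have hFx : ∀ a b, G.Adj a b → s(a, b) ∉ A → a = x ∨ b = x := fun a b hab habA => by
    rcases Sym2.eq_iff.1 (hF ⟨hab, habA⟩ ⟨hpx, hpxA⟩) with ⟨-, h⟩ | ⟨h, -⟩
    exacts [Or.inr h, Or.inl h]
  have hxyA : s(x, y) ∈ A := by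
    by_contra hxyA
    exact hyp (Sym2.congr_right.1 ((hF ⟨hxy, hxyA⟩ ⟨hpx, hpxA⟩).trans Sym2.eq_swap))
  rcases hD.subdivide_cases hxyA with ⟨hx, -⟩ | hT | hx | hy
  · obtain ⟨b, hb, hbx, hbxA⟩ := exists_adj_of_inClosedNbhd_of_far hfar hpe hpx hxp' hx
    exact absurd (Sym2.congr_left.1 (hF ⟨hbx, hbxA⟩ ⟨hpx, hpxA⟩) ▸ hb) hpD
  · exact absurd (Sym2.mem_mk_left x y) (hxfoot _ hT)
  · exact absurd (Sym2.mem_mk_left x x) (hxfoot _ hx)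
  · exact exists_isIsolating_of_adj_adj hA hD hpe he hy hpx hxy.symm hFx

lemma exists_isIsolating_of_far [Fintype V] (hconn : G.Connected) (hstar : ¬ IsStar G)
    (hA : ↑A ⊆ G.edgeSet) (hF : (G.edgeSet \ ↑A).Subsingleton)
    (hD : IsIsolating (subdivide G A) ↑D) {u v : V} (hpe : e.1 = s(u, v)) (he : Sum.inr e ∈ D)
    (hfar : ∀ p ∈ e.1, ∀ d ∈ D, d ≠ Sum.inr e → ∀ z ∈ footprint d, p ≠ z ∧ ¬ G.Adj p z) :
    ∃ D' : Finset V, IsIsolating G ↑D' ∧ D'.card < D.card := by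
  have hpe' : e.1 = s(v, u) := hpe.trans Sym2.eq_swap
  have hu := fun x (hux : G.Adj u x) (hxv : x ≠ v) => exists_isIsolating_or_pendant hA hF hD hpe he
    (hfar u (hpe ▸ Sym2.mem_mk_left u v)) hux hxv
  have hv := fun x (hvx : G.Adj v x) (hxu : x ≠ u) => exists_isIsolating_or_pendant hA hF hD hpe'
    he (hfar v (hpe ▸ Sym2.mem_mk_right u v)) hvx hxu
  -- Two pendant edges at `u` and `v` would both be the unique unsubdivided edge.
  obtain ⟨y, z, huy, hyz, hzu⟩ := exists_adj_adj_ne_of_not_isStar hconn hstar u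
  by_cases hyv : y = v
  · subst hyv
    rcases hv z hyz hzu with h | ⟨hyzA, -⟩
    · exact h
    obtain ⟨y', z', hyy', hy'z', hz'y⟩ := exists_adj_adj_ne_of_not_isStar hconn hstar y
    by_cases hy'u : y' = u
    · subst hy'u
      rcases hu z' hy'z' hz'y with h | ⟨hy'z'A, -⟩
      · exact h
      rcases Sym2.eq_iff.1 (hF ⟨hyz, hyzA⟩ ⟨hy'z', hy'z'A⟩) with ⟨h, -⟩ | ⟨h, -⟩
      exacts [absurd h huy.ne', absurd h.symm hz'y]
    · rcases hv y' hyy' hy'u with h | ⟨-, hleaf⟩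
      exacts [h, absurd (hleaf z' hy'z') hz'y]
  · rcases hu y huy hyv with h | ⟨-, hleaf⟩
    exacts [h, absurd (hleaf z hyz) hzu]

end Exchange

section Main

variable {V : Type*} [Fintype V] {G : SimpleGraph V} {A : Finset (Sym2 V)}

lemma exists_isIsolating_card_lt [DecidableEq V] (hconn : G.Connected) (hstar : ¬ IsStar G)
    (hA : ↑A ⊆ G.edgeSet) (hF : (G.edgeSet \ ↑A).Subsingleton)
    {D : Finset (V ⊕ {e : Sym2 V // e ∈ A})} (hD : IsIsolating (subdivide G A) ↑D) :
    ∃ D' : Finset V, IsIsolating G ↑D' ∧ D'.card < D.card := by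
  by_cases hT : ∃ e, Sum.inr e ∈ D
  · obtain ⟨e, he⟩ := hT
    obtain ⟨v, hpe⟩ := Sym2.mem_iff_exists.1 (Sym2.out_fst_mem e.1)
    by_cases hnear : ∃ p ∈ e.1, ∃ d ∈ D, d ≠ Sum.inr e ∧ ∃ z ∈ footprint d, p = z ∨ G.Adj p z
    · obtain ⟨p, hp, d, hd, hde, z, hz, hpz⟩ := hnear
      obtain ⟨p', hpe⟩ := Sym2.mem_iff_exists.1 hp
      exact exists_isIsolating_of_near_footprint hA hF hD hpe he hd hde hz hpz
    · push Not at hnear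
      exact exists_isIsolating_of_far hconn hstar hA hF hD hpe he hnear
  · push Not at hT
    obtain ⟨D', hD', hcard⟩ := exists_isIsolating_card_lt_of_isVertexCover hconn hstar
      (isVertexCover_toLeft hF hD hT)
    exact ⟨D', hD', hcard.trans_le Finset.card_toLeft_le⟩

theorem iso_lt_iso_subdivide (hconn : G.Connected) (hstar : ¬ IsStar G) (hA : ↑A ⊆ G.edgeSet)
    (hF : (G.edgeSet \ ↑A).Subsingleton) : iso G < iso (subdivide G A) := by
  classical
  obtain ⟨D, hD, hcard⟩ := exists_isIsolating_card_eq_iso (G := subdivide G A)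
  obtain ⟨D', hD', hlt⟩ := exists_isIsolating_card_lt hconn hstar hA hF hD
  exact hcard ▸ (iso_le_card hD').trans_lt hlt

end Main

theorem stmt11_general {V : Type*} [Fintype V] (G : SimpleGraph V) [DecidableRel G.Adj]
    (hconn : G.Connected) (hstar : ¬ IsStar G)
    (q : ℕ) (hcrit : IotaCritical G q) :
    q ≤ G.edgeFinset.card - 1 := by
  classical
  obtain ⟨-, A, hA, hcard, hiso⟩ := hcrit
  by_contra! hq
  have hF : (G.edgeSet \ ↑A).Subsingleton := by
    have hsub : A ⊆ G.edgeFinset := fun e he => G.mem_edgeFinset.2 (hA he)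
    have : (G.edgeFinset \ A).card ≤ 1 := by
      rw [Finset.card_sdiff_of_subset hsub]
      omega
    intro e he f hf
    exact Finset.card_le_one.1 this e (by simpa using he) f (by simpa using hf)
  exact (iso_lt_iso_subdivide hconn hstar hA hF).ne' hiso

theorem stmt11 {V : Type*} [Fintype V] (G : SimpleGraph V) [DecidableRel G.Adj]
    (hconn : G.Connected) (hstar : ¬ IsStar G)
    (q : ℕ) (hq : 1 ≤ q) (hcrit : IotaCritical G q) :
    q ≤ G.edgeFinset.card - 1 :=
  stmt11_general G hconn hstar q hcrit
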